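/- arXiv:1711.01052 — 3 statements merged into one kernel-verified Lean document; each statement's English description precedes it below -/
import Mathlib

section
/- Let X be a compact Hausdorff space, σ : X → X a homeomorphism, and f : ℤ × X → ℤ a function such that f(n, ·) is continuous for each n ∈ ℤ, f(m + n, x) = f(m, x) + f(n, σ^m(x)) for all m, n ∈ ℤ and x ∈ X, and n ↦ f(n, x) is a bijection of ℤ for each x ∈ X. Let X₁ := {x ∈ X : there is N ∈ ℕ such that f(n, x) > 0 and f(−n, x) < 0 for all n > N} and X₂ := {x ∈ X : there is N ∈ ℕ such that f(n, x) < 0 and f(−n, x) > 0 for all n > N}. Then there exist continuous functions a : X₁ → ℤ and b : X₂ → ℤ such that f(1, x) = a(x) − a(σ(x)) + 1 for all x ∈ X₁ and f(1, x) = b(x) − b(σ(x)) − 1 for all x ∈ X₂. -/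
/-!
For `x ∈ X₁` the bijection `gₓ = f(·, x)` of `ℤ` sends all large integers to positive ones and
all very negative integers to negative ones, so `a(x)`, the number of `m ≤ 0` with `gₓ m > 0`
minus the number of `m > 0` with `gₓ m ≤ 0`, is finite. The cocycle identity says
`g_{σx} = gₓ(· + 1) - f(1, x)`; moving the cut in the source by one changes this count by `+1`,
moving it in the target by `c` changes it by `-c`, which is the coboundary equation.

`a` is locally constant: by compactness the increments of every `g_y` are bounded below by some
`c`, so `g_y` cannot pass from positive to non-positive values (or from non-negative to negative
ones, going right) without hitting the window `[c, 0]`. Near `x₀`, `g_y` agrees with `g_{x₀}` on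
an interval that already contains the `g_{x₀}`-preimages of this window, so injectivity forbids
such crossings outside it, and `g_y` has the sign pattern of `g_{x₀}` there. `X₂` is `X₁` for `-f`.
-/

open Set Filter Function Topology

def PosNegOutside (g : ℤ → ℤ) (K : ℤ) : Prop :=
  ∀ n, K < n → 0 < g n ∧ g (-n) < 0

namespace PosNegOutside

variable {g : ℤ → ℤ} {K : ℤ}

lemma pos (hg : PosNegOutside g K) {n : ℤ} (hn : K < n) : 0 < g n := (hg n hn).1

lemma neg (hg : PosNegOutside g K) {n : ℤ} (hn : n < -K) : g n < 0 := by
  simpa using (hg (-n) (by omega)).2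

lemma nonneg (hg : PosNegOutside g K) : 0 ≤ K := by
  by_contra! hK
  have := hg 0 hK
  simp only [neg_zero] at this
  omega

lemma mono (hg : PosNegOutside g K) {L : ℤ} (hKL : K ≤ L) : PosNegOutside g L :=
  fun n hn => hg n (hKL.trans_lt hn)

lemma finite_le_lt (hg : PosNegOutside g K) (hinj : Injective g) (k t : ℤ) :
    {m | m ≤ k ∧ t < g m}.Finite := by
  refine ((finite_Icc (-K) k).union ((finite_Icc t (-1)).preimage hinj.injOn)).subset ?_
  rintro m ⟨hmk, hm⟩
  by_cases hK : -K ≤ m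
  · exact Or.inl ⟨hK, hmk⟩
  · exact Or.inr ⟨hm.le, by linarith [hg.neg (not_le.1 hK)]⟩

lemma finite_lt_le (hg : PosNegOutside g K) (hinj : Injective g) (k t : ℤ) :
    {m | k < m ∧ g m ≤ t}.Finite := by
  refine ((finite_Icc k K).union ((finite_Icc 1 t).preimage hinj.injOn)).subset ?_
  rintro m ⟨hkm, hm⟩
  by_cases hK : m ≤ K
  · exact Or.inl ⟨hkm.le, hK⟩
  · exact Or.inr ⟨by linarith [hg.pos (not_le.1 hK)], hm⟩

lemma exists_image_Icc (hg : PosNegOutside g K) (hbij : Bijective g) {s : Set ℤ}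
    (hs : s.Finite) : ∃ T, PosNegOutside g T ∧ s ⊆ g '' Icc (-T) T := by
  obtain ⟨a, ha⟩ := (hs.preimage hbij.1.injOn).bddAbove
  obtain ⟨b, hb⟩ := (hs.preimage hbij.1.injOn).bddBelow
  refine ⟨max K (max a (-b)), hg.mono (le_max_left _ _), ?_⟩
  rw [← hbij.2.image_preimage s]
  refine image_mono fun m hm => ⟨?_, ?_⟩
  · linarith [hb hm, le_max_right a (-b), le_max_right K (max a (-b))]
  · linarith [ha hm, le_max_left a (-b), le_max_right K (max a (-b))]

end PosNegOutside

lemma exists_between_of_step_ge {h : ℤ → ℤ} {c : ℤ} (hstep : ∀ n, c ≤ h (n + 1) - h n)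
    {b p q : ℤ} (hpq : p ≤ q) (hp : b < h p) (hq : h q ≤ b) :
    ∃ k, p < k ∧ k ≤ q ∧ b + c < h k ∧ h k ≤ b := by
  induction q, hpq using Int.leInduction with
  | base => omega
  | succ q hpq ih =>
    by_cases hb : h q ≤ b
    · obtain ⟨k, hpk, hkq, hk⟩ := ih hb
      exact ⟨k, hpk, by omega, hk⟩
    · exact ⟨q + 1, by omega, le_rfl, by linarith [hstep q], hq⟩

lemma PosNegOutside.of_eqOn {g h : ℤ → ℤ} {c T : ℤ} (hg : PosNegOutside g T)
    (hT : Icc c 0 ⊆ g '' Icc (-T) T) (hinj : Injective h) (hstep : ∀ n, c ≤ h (n + 1) - h n)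
    (heq : EqOn g h (Icc (-(T + 1)) (T + 1))) : PosNegOutside h T := by
  have hwindow : ∀ k, c ≤ h k → h k ≤ 0 → -T ≤ k ∧ k ≤ T := by
    intro k hck hk0
    obtain ⟨j, hj, hjk⟩ := hT ⟨hck, hk0⟩
    have : j = k := hinj ((heq ⟨by linarith [hj.1], by linarith [hj.2]⟩).symm.trans hjk)
    exact this ▸ hj
  have hT0 := hg.nonneg
  have hright : 0 < h (T + 1) := heq ⟨by omega, le_rfl⟩ ▸ hg.pos (lt_add_one T)
  have hleft : h (-(T + 1)) < 0 := heq ⟨le_rfl, by omega⟩ ▸ hg.neg (by omega)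
  intro n hn
  constructor
  · by_contra! hle
    obtain ⟨k, hk, hkn, hck, hk0⟩ :=
      exists_between_of_step_ge hstep (by omega : T + 1 ≤ n) hright hle
    have := hwindow k (by omega) hk0
    omega
  · by_contra! hle
    obtain ⟨k, hk, hkn, hck, hk0⟩ :=
      exists_between_of_step_ge hstep (b := -1) (by omega : -n ≤ -(T + 1)) (by omega) (by omega)
    have := hwindow k (by omega) (by omega)
    omega

-- Both sets are finite for the functions of interest (`PosNegOutside.finite_le_lt`,
-- `PosNegOutside.finite_lt_le`); otherwise `ncard` would silently return `0`.
noncomputable def cutIndex (g : ℤ → ℤ) (k t : ℤ) : ℤ :=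
  {m | m ≤ k ∧ t < g m}.ncard - {m | k < m ∧ g m ≤ t}.ncard

section cutIndex

variable {g : ℤ → ℤ} {K : ℤ}

lemma cutIndex_comp_add_sub (g : ℤ → ℤ) (j c k t : ℤ) :
    cutIndex (fun m => g (m + j) - c) k t = cutIndex g (k + j) (t + c) := by
  have hrange : ∀ s : Set ℤ, s ⊆ range (· + j) := fun s m _ => ⟨m - j, by simp⟩
  have hP : {m | m ≤ k ∧ t < g (m + j) - c} = (· + j) ⁻¹' {m | m ≤ k + j ∧ t + c < g m} := by
    ext m; simp only [mem_preimage, mem_ofPred_eq]; omega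
  have hQ : {m | k < m ∧ g (m + j) - c ≤ t} = (· + j) ⁻¹' {m | k + j < m ∧ g m ≤ t + c} := by
    ext m; simp only [mem_preimage, mem_ofPred_eq]; omega
  rw [cutIndex, cutIndex, hP, hQ,
    ncard_preimage_of_injective_subset_range (add_left_injective j) (hrange _),
    ncard_preimage_of_injective_subset_range (add_left_injective j) (hrange _)]

lemma cutIndex_succ_left (hg : PosNegOutside g K) (hinj : Injective g) (k t : ℤ) :
    cutIndex g (k + 1) t = cutIndex g k t + 1 := by
  unfold cutIndex
  by_cases h : t < g (k + 1)
  · have hP : {m | m ≤ k + 1 ∧ t < g m} = insert (k + 1) {m | m ≤ k ∧ t < g m} := by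
      ext m; simp only [mem_ofPred_eq, mem_insert_iff]; grind
    have hQ : {m | k + 1 < m ∧ g m ≤ t} = {m | k < m ∧ g m ≤ t} := by
      ext m; simp only [mem_ofPred_eq]; grind
    rw [hP, hQ, ncard_insert_of_notMem (by simp) (hg.finite_le_lt hinj k t)]
    push_cast; ring
  · have hP : {m | m ≤ k + 1 ∧ t < g m} = {m | m ≤ k ∧ t < g m} := by
      ext m; simp only [mem_ofPred_eq]; grind
    have hQ : {m | k < m ∧ g m ≤ t} = insert (k + 1) {m | k + 1 < m ∧ g m ≤ t} := by
      ext m; simp only [mem_ofPred_eq, mem_insert_iff]; grind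
    rw [hP, hQ, ncard_insert_of_notMem (by simp) (hg.finite_lt_le hinj (k + 1) t)]
    push_cast; ring

lemma cutIndex_succ_right (hg : PosNegOutside g K) (hbij : Bijective g) (k t : ℤ) :
    cutIndex g k (t + 1) = cutIndex g k t - 1 := by
  obtain ⟨s, hs⟩ := hbij.2 (t + 1)
  have hinj := hbij.1
  unfold cutIndex
  by_cases h : s ≤ k
  · have hP : {m | m ≤ k ∧ t < g m} = insert s {m | m ≤ k ∧ t + 1 < g m} := by
      ext m; simp only [mem_ofPred_eq, mem_insert_iff]; grind
    have hQ : {m | k < m ∧ g m ≤ t + 1} = {m | k < m ∧ g m ≤ t} := by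
      ext m; simp only [mem_ofPred_eq]; grind
    rw [hP, hQ, ncard_insert_of_notMem (by simp [hs]) (hg.finite_le_lt hinj k (t + 1))]
    push_cast; ring
  · have hP : {m | m ≤ k ∧ t + 1 < g m} = {m | m ≤ k ∧ t < g m} := by
      ext m; simp only [mem_ofPred_eq]; grind
    have hQ : {m | k < m ∧ g m ≤ t + 1} = insert s {m | k < m ∧ g m ≤ t} := by
      ext m; simp only [mem_ofPred_eq, mem_insert_iff]; grind
    rw [hP, hQ, ncard_insert_of_notMem (by simp [hs]) (hg.finite_lt_le hinj k t)]
    push_cast; ring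

lemma cutIndex_eq (hg : PosNegOutside g K) (hbij : Bijective g) (k t : ℤ) :
    cutIndex g k t = cutIndex g 0 0 + k - t := by
  have hk : cutIndex g k 0 = cutIndex g 0 0 + k := by
    induction k using Int.induction_on with
    | zero => ring
    | succ i ih => rw [cutIndex_succ_left hg hbij.1, ih]; ring
    | pred i ih =>
      have := cutIndex_succ_left hg hbij.1 (-i - 1) 0
      rw [sub_add_cancel] at this
      linarith
  induction t using Int.induction_on with
  | zero => rw [hk]; ring
  | succ i ih => rw [cutIndex_succ_right hg hbij, ih]; ring
  | pred i ih =>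
    have := cutIndex_succ_right hg hbij k (-i - 1)
    rw [sub_add_cancel] at this
    linarith

lemma cutIndex_zero_congr {h : ℤ → ℤ} (hg : PosNegOutside g K) (hh : PosNegOutside h K)
    (heq : EqOn g h (Icc (-K) K)) : cutIndex g 0 0 = cutIndex h 0 0 := by
  have hleft : ∀ m ≤ 0, 0 < g m ↔ 0 < h m := by
    intro m hm
    by_cases hK : -K ≤ m
    · rw [heq ⟨hK, by omega⟩]
    · simp only [(hg.neg (not_le.1 hK)).not_gt, (hh.neg (not_le.1 hK)).not_gt]
  have hright : ∀ m, 0 < m → (g m ≤ 0 ↔ h m ≤ 0) := by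
    intro m hm
    by_cases hK : m ≤ K
    · rw [heq ⟨by omega, hK⟩]
    · simp only [(hg.pos (not_le.1 hK)).not_ge, (hh.pos (not_le.1 hK)).not_ge]
  unfold cutIndex
  congr 3 <;> ext m <;> simp only [mem_ofPred_eq]
  · exact and_congr_right (hleft m)
  · exact and_congr_right (hright m)

end cutIndex

section Cocycle

variable {X : Type*} [TopologicalSpace X] {σ : X ≃ₜ X} {f : ℤ → X → ℤ}

lemma cutIndex_apply_homeomorph
    (hcoc : ∀ (m n : ℤ) (x : X), f (m + n) x = f m x + f n ((σ.toEquiv ^ m) x)) {x : X} {K : ℤ}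
    (hbij : Bijective (f · x)) (hx : PosNegOutside (f · x) K) :
    cutIndex (f · (σ x)) 0 0 = cutIndex (f · x) 0 0 + 1 - f 1 x := by
  have hσ : (f · (σ x)) = fun m => f (m + 1) x - f 1 x := by
    funext m
    rw [add_comm, hcoc, zpow_one]
    simp
  rw [hσ, cutIndex_comp_add_sub (f · x) 1 (f 1 x) 0 0, cutIndex_eq hx hbij]
  ring

lemma continuousAt_cutIndex [CompactSpace X] (hcont : ∀ n, Continuous (f n))
    (hcoc : ∀ (m n : ℤ) (x : X), f (m + n) x = f m x + f n ((σ.toEquiv ^ m) x))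
    (hbij : ∀ x, Bijective (f · x)) {x₀ : X} {K : ℤ} (hx₀ : PosNegOutside (f · x₀) K) :
    ContinuousAt (fun x => cutIndex (f · x) 0 0) x₀ := by
  obtain ⟨c, hc⟩ := (isCompact_range (hcont 1)).bddBelow
  have hstep : ∀ x n, c ≤ f (n + 1) x - f n x := fun x n => by
    rw [hcoc]
    simpa using hc ⟨_, rfl⟩
  obtain ⟨T, hT, hTc⟩ := hx₀.exists_image_Icc (hbij x₀) (finite_Icc c 0)
  have hnear : ∀ᶠ x in 𝓝 x₀, EqOn (f · x₀) (f · x) (Icc (-(T + 1)) (T + 1)) :=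
    (finite_Icc _ _).eventually_all.2 fun j _ =>
      (tendsto_pure.1 (by simpa only [nhds_discrete] using (hcont j).tendsto x₀)).mono
        fun _ hx => hx.symm
  refine (continuousAt_const (y := cutIndex (f · x₀) 0 0)).congr (hnear.mono fun x hx => ?_)
  exact cutIndex_zero_congr hT (hT.of_eqOn hTc (hbij x).1 (hstep x) hx)
    (hx.mono (Icc_subset_Icc (by omega) (by omega)))

theorem exists_continuousOn_coboundary [CompactSpace X] (σ : X ≃ₜ X)
    (hcont : ∀ n, Continuous (f n))
    (hcoc : ∀ (m n : ℤ) (x : X), f (m + n) x = f m x + f n ((σ.toEquiv ^ m) x))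
    (hbij : ∀ x, Bijective (f · x)) :
    ∃ a : X → ℤ, ContinuousOn a {x | ∃ K, PosNegOutside (f · x) K} ∧
      ∀ x ∈ {x | ∃ K, PosNegOutside (f · x) K}, f 1 x = a x - a (σ x) + 1 :=
  ⟨fun x => cutIndex (f · x) 0 0,
    fun _ ⟨_, hK⟩ => (continuousAt_cutIndex hcont hcoc hbij hK).continuousWithinAt,
    fun x ⟨_, hK⟩ => by dsimp only; rw [cutIndex_apply_homeomorph hcoc (hbij x) hK]; ring⟩

end Cocycle

theorem statement_17_general (X : Type) [TopologicalSpace X] [CompactSpace X]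
    (σ : X ≃ₜ X) (f : ℤ → X → ℤ)
    (hcont : ∀ n : ℤ, Continuous (f n))
    (hcoc : ∀ (m n : ℤ) (x : X), f (m + n) x = f m x + f n ((σ.toEquiv ^ m) x))
    (hbij : ∀ x : X, Function.Bijective fun n : ℤ => f n x)
    (X₁ X₂ : Set X)
    (hX₁ : X₁ = {x | ∃ N : ℕ, ∀ n : ℤ, (N : ℤ) < n → 0 < f n x ∧ f (-n) x < 0})
    (hX₂ : X₂ = {x | ∃ N : ℕ, ∀ n : ℤ, (N : ℤ) < n → f n x < 0 ∧ 0 < f (-n) x}) :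
    ∃ a b : X → ℤ, ContinuousOn a X₁ ∧ ContinuousOn b X₂ ∧
      (∀ x ∈ X₁, f 1 x = a x - a (σ x) + 1) ∧
      (∀ x ∈ X₂, f 1 x = b x - b (σ x) - 1) := by
  obtain ⟨a, ha, hfa⟩ := exists_continuousOn_coboundary σ hcont hcoc hbij
  obtain ⟨b, hb, hfb⟩ := exists_continuousOn_coboundary σ (f := fun n x => -f n x)
    (fun n => (hcont n).neg) (fun m n x => by rw [hcoc, neg_add])
    (fun x => neg_bijective.comp (hbij x))
  have h₁ : X₁ ⊆ {x | ∃ K, PosNegOutside (f · x) K} := hX₁ ▸ fun _ ⟨N, hN⟩ => ⟨N, hN⟩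
  have h₂ : X₂ ⊆ {x | ∃ K, PosNegOutside (-f · x) K} := hX₂ ▸ fun _ ⟨N, hN⟩ =>
    ⟨N, fun n hn => by simpa only [neg_pos, neg_lt_zero, and_comm] using hN n hn⟩
  refine ⟨a, -b, ha.mono h₁, hb.neg.mono h₂, fun x hx => hfa x (h₁ hx), fun x hx => ?_⟩
  have := hfb x (h₂ hx)
  simp only [Pi.neg_apply]
  linarith

theorem statement_17 (X : Type) [TopologicalSpace X] [CompactSpace X] [T2Space X]
    (σ : X ≃ₜ X) (f : ℤ → X → ℤ)
    (hcont : ∀ n : ℤ, Continuous (f n))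
    (hcoc : ∀ (m n : ℤ) (x : X), f (m + n) x = f m x + f n ((σ.toEquiv ^ m) x))
    (hbij : ∀ x : X, Function.Bijective fun n : ℤ => f n x)
    (X₁ X₂ : Set X)
    (hX₁ : X₁ = {x | ∃ N : ℕ, ∀ n : ℤ, (N : ℤ) < n → 0 < f n x ∧ f (-n) x < 0})
    (hX₂ : X₂ = {x | ∃ N : ℕ, ∀ n : ℤ, (N : ℤ) < n → f n x < 0 ∧ 0 < f (-n) x}) :
    ∃ a b : X → ℤ, ContinuousOn a X₁ ∧ ContinuousOn b X₂ ∧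
      (∀ x ∈ X₁, f 1 x = a x - a (σ x) + 1) ∧
      (∀ x ∈ X₂, f 1 x = b x - b (σ x) - 1) :=
  statement_17_general X σ f hcont hcoc hbij X₁ X₂ hX₁ hX₂
end

section
/- Let X and Y be second-countable compact totally disconnected Hausdorff spaces and let σ : X → X and τ : Y → Y be surjective local homeomorphisms. Suppose there exist continuous open maps f : X → Y and f' : Y → X and continuous maps a, k : X → ℕ and a', k' : Y → ℕ such that σ^{a(x)}(f'(f(x))) = σ^{a(x)}(x) for all x ∈ X, τ^{k(x)}(f(σ(x))) = τ^{k(x)+1}(f(x)) for all x ∈ X, τ^{a'(y)}(f(f'(y))) = τ^{a'(y)}(y) for all y ∈ Y, and σ^{k'(y)}(f'(τ(y))) = σ^{k'(y)+1}(f'(y)) for all y ∈ Y. Then there is a conjugacy from (↔X, ↔σ) to (↔Y, ↔τ), i.e. a homeomorphism ψ : ↔X → ↔Y with ψ ∘ ↔σ = ↔τ ∘ ψ. -/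
/-- The two-sided dilation `↔X` of a system `(X, σ)`: sequences `ξ : ℤ → X`
with `σ(ξ_n) = ξ_{n+1}`, topologised as a subspace of the product `X^ℤ`. -/
abbrev Dil (X : Type) [TopologicalSpace X] (σ : X → X) : Type :=
  {ξ : ℤ → X // ∀ n : ℤ, σ (ξ n) = ξ (n + 1)}

/-- The dilated homeomorphism `↔σ : ↔X → ↔X`, `(↔σ ξ)_n = σ(ξ_n)`. -/
def dilMap {X : Type} [TopologicalSpace X] (σ : X → X) (ξ : Dil X σ) : Dil X σ :=
  ⟨fun n => σ (ξ.1 n), fun n => congrArg σ (ξ.2 n)⟩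

/-- A continuous ℕ-valued map on a compact space is bounded. -/
lemma exists_bound_of_compact {Z : Type} [TopologicalSpace Z] [CompactSpace Z]
    (g : Z → ℕ) (hg : Continuous g) : ∃ N : ℕ, ∀ z, g z ≤ N := by
  have hfin : (Set.range g).Finite := (isCompact_range hg).finite_of_discrete
  obtain ⟨N, hN⟩ := hfin.bddAbove
  exact ⟨N, fun z => hN (Set.mem_range_self z)⟩

/-- Boosting an iterate identity. -/
lemma iter_boost {Z : Type} (g : Z → Z) {m n : ℕ} (h : m ≤ n) {z w : Z}
    (hz : g^[m] z = g^[m] w) : g^[n] z = g^[n] w := by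
  have e : n = (n - m) + m := by omega
  rw [e, Function.iterate_add_apply, Function.iterate_add_apply, hz]

lemma dil_iter {X : Type} [TopologicalSpace X] {σ : X → X} (ξ : Dil X σ) (j : ℕ) (m : ℤ) :
    σ^[j] (ξ.1 m) = ξ.1 (m + j) := by
  induction j with
  | zero => simp
  | succ j ih =>
      rw [Function.iterate_succ_apply', ih, ξ.2 (m + j)]
      congr 1
      push_cast
      ring

theorem statement_18 (X Y : Type) [TopologicalSpace X] [TopologicalSpace Y]
    [CompactSpace X] [CompactSpace Y] [T2Space X] [T2Space Y]
    [SecondCountableTopology X] [SecondCountableTopology Y]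
    [TotallyDisconnectedSpace X] [TotallyDisconnectedSpace Y]
    (σ : X → X) (τ : Y → Y)
    (hσ : IsLocalHomeomorph σ) (hσsurj : Function.Surjective σ)
    (hτ : IsLocalHomeomorph τ) (hτsurj : Function.Surjective τ)
    (f : X → Y) (f' : Y → X)
    (hf : Continuous f) (hfopen : IsOpenMap f)
    (hf' : Continuous f') (hf'open : IsOpenMap f')
    (a k : X → ℕ) (a' k' : Y → ℕ)
    (ha : Continuous a) (hk : Continuous k) (ha' : Continuous a') (hk' : Continuous k')
    (h1 : ∀ x : X, σ^[a x] (f' (f x)) = σ^[a x] x)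
    (h2 : ∀ x : X, τ^[k x] (f (σ x)) = τ^[k x + 1] (f x))
    (h3 : ∀ y : Y, τ^[a' y] (f (f' y)) = τ^[a' y] y)
    (h4 : ∀ y : Y, σ^[k' y] (f' (τ y)) = σ^[k' y + 1] (f' y)) :
    ∃ ψ : Dil X σ ≃ₜ Dil Y τ, ∀ ξ : Dil X σ, ψ (dilMap σ ξ) = dilMap τ (ψ ξ) := by
  classical
  obtain ⟨Nk, hNk⟩ := exists_bound_of_compact k hk
  obtain ⟨Na, hNa⟩ := exists_bound_of_compact a ha
  obtain ⟨Nk', hNk'⟩ := exists_bound_of_compact k' hk'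
  obtain ⟨Na', hNa'⟩ := exists_bound_of_compact a' ha'
  set N : ℕ := Nk + Na + Nk' + Na' with hNdef
  have hσc : Continuous σ := hσ.continuous
  have hτc : Continuous τ := hτ.continuous
  -- boosted identities
  have h2N : ∀ x : X, τ^[N] (f (σ x)) = τ (τ^[N] (f x)) := by
    intro x
    have hb : k x ≤ N := le_trans (hNk x) (by omega)
    have e1 : τ^[k x] (f (σ x)) = τ^[k x] (τ (f x)) := by
      rw [h2 x, ← Function.iterate_succ_apply]
    have := iter_boost τ hb e1
    rw [this, ← Function.iterate_succ_apply, Function.iterate_succ_apply']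
  have h4N : ∀ y : Y, σ^[N] (f' (τ y)) = σ (σ^[N] (f' y)) := by
    intro y
    have hb : k' y ≤ N := le_trans (hNk' y) (by omega)
    have e1 : σ^[k' y] (f' (τ y)) = σ^[k' y] (σ (f' y)) := by
      rw [h4 y, ← Function.iterate_succ_apply]
    have := iter_boost σ hb e1
    rw [this, ← Function.iterate_succ_apply, Function.iterate_succ_apply']
  have h1N : ∀ x : X, σ^[N + N] (f' (f x)) = σ^[N + N] x := by
    intro x
    exact iter_boost σ (le_trans (hNa x) (by omega)) (h1 x)
  have h3N : ∀ y : Y, τ^[N + N] (f (f' y)) = τ^[N + N] y := by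
    intro y
    exact iter_boost τ (le_trans (hNa' y) (by omega)) (h3 y)
  -- iterated versions
  have h2iter : ∀ (j : ℕ) (x : X), τ^[N] (f (σ^[j] x)) = τ^[j] (τ^[N] (f x)) := by
    intro j
    induction j with
    | zero => intro x; simp
    | succ j ih =>
        intro x
        rw [Function.iterate_succ_apply', h2N (σ^[j] x), ih x]
        exact (Function.iterate_succ_apply' τ j _).symm
  have h4iter : ∀ (j : ℕ) (y : Y), σ^[N] (f' (τ^[j] y)) = σ^[j] (σ^[N] (f' y)) := by
    intro j
    induction j with
    | zero => intro y; simp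
    | succ j ih =>
        intro y
        rw [Function.iterate_succ_apply', h4N (τ^[j] y), ih y]
        exact (Function.iterate_succ_apply' σ j _).symm
  -- the forward map
  have ψprop : ∀ ξ : Dil X σ, ∀ n : ℤ, τ (τ^[N] (f (ξ.1 (n - N)))) = τ^[N] (f (ξ.1 (n + 1 - N))) := by
    intro ξ n
    have e : ξ.1 (n + 1 - N) = σ (ξ.1 (n - N)) := by
      rw [ξ.2 (n - N)]; congr 1; ring
    rw [e, h2N]
  have φprop : ∀ η : Dil Y τ, ∀ n : ℤ, σ (σ^[N] (f' (η.1 (n - N)))) = σ^[N] (f' (η.1 (n + 1 - N))) := by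
    intro η n
    have e : η.1 (n + 1 - N) = τ (η.1 (n - N)) := by
      rw [η.2 (n - N)]; congr 1; ring
    rw [e, h4N]
  set ψf : Dil X σ → Dil Y τ := fun ξ => ⟨fun n => τ^[N] (f (ξ.1 (n - N))), ψprop ξ⟩ with hψf
  set φf : Dil Y τ → Dil X σ := fun η => ⟨fun n => σ^[N] (f' (η.1 (n - N))), φprop η⟩ with hφf
  have left_inv : ∀ ξ : Dil X σ, φf (ψf ξ) = ξ := by
    intro ξ
    apply Subtype.ext
    funext n
    show σ^[N] (f' (τ^[N] (f (ξ.1 (n - N - N))))) = ξ.1 n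
    rw [h4iter N (f (ξ.1 (n - N - N))), ← Function.iterate_add_apply, h1N,
      dil_iter ξ (N + N) (n - N - N)]
    congr 1
    push_cast
    ring
  have right_inv : ∀ η : Dil Y τ, ψf (φf η) = η := by
    intro η
    apply Subtype.ext
    funext n
    show τ^[N] (f (σ^[N] (f' (η.1 (n - N - N))))) = η.1 n
    rw [h2iter N (f' (η.1 (n - N - N))), ← Function.iterate_add_apply, h3N,
      dil_iter η (N + N) (n - N - N)]
    congr 1
    push_cast
    ring
  have ψcont : Continuous ψf := by
    apply Continuous.subtype_mk
    apply continuous_pi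
    intro n
    exact (hτc.iterate N).comp (hf.comp ((continuous_apply (n - N)).comp continuous_subtype_val))
  have φcont : Continuous φf := by
    apply Continuous.subtype_mk
    apply continuous_pi
    intro n
    exact (hσc.iterate N).comp (hf'.comp ((continuous_apply (n - N)).comp continuous_subtype_val))
  refine ⟨⟨⟨ψf, φf, left_inv, right_inv⟩, ψcont, φcont⟩, ?_⟩
  intro ξ
  apply Subtype.ext
  funext n
  show τ^[N] (f (σ ((ξ.1 (n - N))))) = τ (τ^[N] (f (ξ.1 (n - N))))
  exact h2N (ξ.1 (n - N))
end

section
/- Let X and Y be second-countable compact totally disconnected Hausdorff metrisable spaces and let σ : X → X and τ : Y → Y be surjective local homeomorphisms that are expansive. If there is a conjugacy from (↔X, ↔σ) to (↔Y, ↔τ), i.e. a homeomorphism ψ : ↔X → ↔Y with ψ ∘ ↔σ = ↔τ ∘ ψ, then there exist continuous open maps f : X → Y and f' : Y → X and N ∈ ℕ such that f ∘ σ = τ ∘ f, f' ∘ τ = σ ∘ f', f' ∘ f = σ^N, and f ∘ f' = τ^N. -/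
/-- `σ` is expansive: for some metric `d` inducing the topology of `X` and some `ε > 0`,
if all iterates of two points stay within `ε`, then the points are equal. -/
def Expansive {X : Type} [t : TopologicalSpace X] (σ : X → X) : Prop :=
  ∃ m : MetricSpace X, m.toUniformSpace.toTopologicalSpace = t ∧
    ∃ ε : ℝ, 0 < ε ∧ ∀ x x' : X,
      (∀ n : ℕ, @dist X m.toDist (σ^[n] x) (σ^[n] x') < ε) → x = x'

namespace Aux19

variable {X : Type} [TopologicalSpace X] {σ : X → X}

lemma dil_add (ξ : Dil X σ) (n : ℤ) (k : ℕ) : ξ.1 (n + k) = σ^[k] (ξ.1 n) := by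
  induction k with
  | zero => simp
  | succ k ih =>
      have h0 : n + ((k : ℤ) + 1) = (n + k) + 1 := by ring
      push_cast
      rw [h0, ← ξ.2 (n + k), ih]
      exact (Function.iterate_succ_apply' σ k _).symm

lemma dilMap_iterate (m : ℕ) (ξ : Dil X σ) (n : ℤ) :
    ((dilMap σ)^[m] ξ).1 n = ξ.1 (n + m) := by
  induction m generalizing ξ with
  | zero => simp
  | succ m ih =>
      rw [Function.iterate_succ_apply, ih (dilMap σ ξ)]
      show σ (ξ.1 (n + m)) = _
      rw [ξ.2 (n + m)]
      push_cast
      ring_nf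

lemma exists_dil (hs : Function.Surjective σ) (k : ℤ) (x : X) :
    ∃ ξ : Dil X σ, ξ.1 k = x := by
  classical
  let b : ℕ → X := fun n => Nat.rec x (fun _ ih => Classical.choose (hs ih)) n
  have hb : ∀ n : ℕ, σ (b (n + 1)) = b n := fun n => Classical.choose_spec (hs (b n))
  refine ⟨⟨fun n => if k ≤ n then σ^[(n - k).toNat] x else b ((k - n).toNat), ?_⟩, ?_⟩
  · intro n
    by_cases h : k ≤ n
    · have h1 : k ≤ n + 1 := by omega
      simp only [h, h1, if_true]
      rw [← Function.iterate_succ_apply' σ]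
      congr 1
      omega
    · by_cases h2 : k ≤ n + 1
      · have hk : k = n + 1 := by omega
        simp only [h, h2, if_false, if_true]
        have : (k - n).toNat = 1 := by omega
        rw [this]
        have : (n + 1 - k).toNat = 0 := by omega
        rw [this]
        exact hb 0
      · simp only [h, h2, if_false]
        have : (k - n).toNat = (k - (n + 1)).toNat + 1 := by omega
        rw [this]
        exact hb _
  · simp

lemma dil_compactSpace [CompactSpace X] [T2Space X] (hc : Continuous σ) :
    CompactSpace (Dil X σ) := by
  have hcl : IsClosed {ξ : ℤ → X | ∀ n : ℤ, σ (ξ n) = ξ (n + 1)} := by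
    have : {ξ : ℤ → X | ∀ n : ℤ, σ (ξ n) = ξ (n + 1)} =
        ⋂ n : ℤ, {ξ : ℤ → X | σ (ξ n) = ξ (n + 1)} := by
      ext ξ; simp [Set.mem_iInter]
    rw [this]
    exact isClosed_iInter fun n =>
      isClosed_eq (hc.comp (continuous_apply n)) (continuous_apply (n + 1))
  exact isCompact_iff_compactSpace.mp hcl.isCompact

lemma iterate_isOpenMap {f : X → X} (hf : IsOpenMap f) (k : ℕ) : IsOpenMap (f^[k]) := by
  induction k with
  | zero => simpa using IsOpenMap.id
  | succ k ih => rw [Function.iterate_succ]; exact ih.comp hf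

lemma pr0_isOpenMap [CompactSpace X] (ho : IsOpenMap σ) (hc : Continuous σ)
    (hs : Function.Surjective σ) : IsOpenMap (fun ξ : Dil X σ => ξ.1 0) := by
  intro O hO
  rw [isOpen_iff_forall_mem_open]
  rintro x ⟨ξ, hξO, hξx⟩
  obtain ⟨O', hO', hOeq⟩ := isOpen_induced_iff.mp hO
  have hmem : ξ.1 ∈ O' := by
    have : ξ ∈ Subtype.val ⁻¹' O' := by rw [hOeq]; exact hξO
    exact this
  obtain ⟨I, u, h1, h2⟩ := isOpen_pi_iff.mp hO' ξ.1 hmem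
  obtain ⟨L, hLle⟩ : ∃ L : ℕ, ∀ n ∈ I, -(L : ℤ) ≤ n := by
    refine ⟨I.sup Int.natAbs, fun n hn => ?_⟩
    have := Finset.le_sup (f := Int.natAbs) hn
    omega
  set W : Set X := ⋂ n ∈ I, (σ^[(n + (L : ℤ)).toNat]) ⁻¹' (u n) with hW
  have hWopen : IsOpen W := by
    refine isOpen_biInter_finset fun n hn => ?_
    exact (h1 n hn).1.preimage (hc.iterate _)
  refine ⟨σ^[L] '' W, ?_, (iterate_isOpenMap ho L) W hWopen, ?_⟩
  · rintro _ ⟨z, hzW, rfl⟩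
    obtain ⟨ζ, hζ⟩ := exists_dil hs (-(L : ℤ)) z
    have hζpi : ζ.1 ∈ (I : Set ℤ).pi u := by
      intro n hn
      have hn' : n ∈ I := hn
      have e : ζ.1 n = σ^[(n + (L : ℤ)).toNat] z := by
        have h3 := dil_add ζ (-(L : ℤ)) ((n + (L : ℤ)).toNat)
        rw [hζ] at h3
        rw [show -(L : ℤ) + (((n + (L : ℤ)).toNat : ℕ) : ℤ) = n from by
          have := hLle n hn'; omega] at h3
        exact h3
      rw [e]
      have := hzW
      rw [hW] at this
      exact Set.mem_iInter₂.mp this n hn'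
    refine ⟨ζ, hOeq ▸ h2 hζpi, ?_⟩
    show ζ.1 0 = σ^[L] z
    have h4 := dil_add ζ (-(L : ℤ)) L
    rw [hζ] at h4
    rw [show -(L : ℤ) + ((L : ℕ) : ℤ) = 0 from by omega] at h4
    exact h4
  · refine ⟨ξ.1 (-(L : ℤ)), ?_, ?_⟩
    · rw [hW]
      refine Set.mem_iInter₂.mpr fun n hn => ?_
      have e : σ^[(n + (L : ℤ)).toNat] (ξ.1 (-(L : ℤ))) = ξ.1 n := by
        have h5 := dil_add ξ (-(L : ℤ)) ((n + (L : ℤ)).toNat)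
        rw [show -(L : ℤ) + (((n + (L : ℤ)).toNat : ℕ) : ℤ) = n from by
          have := hLle n hn; omega] at h5
        exact h5.symm
      rw [Set.mem_preimage, e]
      exact (h1 n hn).2
    · show σ^[L] (ξ.1 (-(L : ℤ))) = x
      have h6 := dil_add ξ (-(L : ℤ)) L
      rw [show -(L : ℤ) + ((L : ℕ) : ℤ) = 0 from by omega] at h6
      rw [← h6]
      exact hξx

lemma dil_coe (ξ : Dil X σ) (k : ℕ) : ξ.1 (k : ℤ) = σ^[k] (ξ.1 0) := by
  have := dil_add ξ 0 k
  rwa [zero_add] at this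

lemma comm_iterate {B : Type} {φ : Dil X σ → B} {sB : B → B}
    (h : ∀ ξ, φ (dilMap σ ξ) = sB (φ ξ)) (m : ℕ) (ξ : Dil X σ) :
    φ ((dilMap σ)^[m] ξ) = sB^[m] (φ ξ) := by
  induction m generalizing ξ with
  | zero => simp
  | succ m ih =>
      rw [Function.iterate_succ_apply, ih (dilMap σ ξ), h]
      exact (Function.iterate_succ_apply sB m (φ ξ)).symm

lemma exists_window {Z : Type} [TopologicalSpace Z] [CompactSpace X] [T2Space X]
    (hc : Continuous σ) (g : Dil X σ → Z) (hg : Continuous g) (P : Set (Z × Z))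
    (hP : ∀ z : Z, ∃ C : Set Z, IsOpen C ∧ z ∈ C ∧ C ×ˢ C ⊆ P) :
    ∃ M : ℕ, ∀ ξ ξ' : Dil X σ,
      (∀ n : ℤ, n.natAbs ≤ M → ξ.1 n = ξ'.1 n) → (g ξ, g ξ') ∈ P := by
  haveI := dil_compactSpace (σ := σ) hc
  have key : ∀ ξ0 : Dil X σ, ∃ (I : Finset ℤ) (u : ℤ → Set X),
      (∀ n ∈ I, IsOpen (u n)) ∧ ξ0.1 ∈ (I : Set ℤ).pi u ∧
      ∀ ξ ξ' : Dil X σ, ξ.1 ∈ (I : Set ℤ).pi u → ξ'.1 ∈ (I : Set ℤ).pi u →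
        (g ξ, g ξ') ∈ P := by
    intro ξ0
    obtain ⟨C, hCo, hzC, hCP⟩ := hP (g ξ0)
    have hpre : IsOpen (g ⁻¹' C) := hCo.preimage hg
    obtain ⟨O', hO', hOeq⟩ := isOpen_induced_iff.mp hpre
    have hmem : ξ0.1 ∈ O' := by
      have : ξ0 ∈ Subtype.val ⁻¹' O' := by rw [hOeq]; exact hzC
      exact this
    obtain ⟨I, u, h1, h2⟩ := isOpen_pi_iff.mp hO' ξ0.1 hmem
    refine ⟨I, u, fun n hn => (h1 n hn).1, fun n hn => (h1 n hn).2,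
      fun ξ ξ' hξ hξ' => hCP ⟨?_, ?_⟩⟩
    · have : ξ ∈ Subtype.val ⁻¹' O' := h2 hξ
      rw [hOeq] at this
      exact this
    · have : ξ' ∈ Subtype.val ⁻¹' O' := h2 hξ'
      rw [hOeq] at this
      exact this
  choose I u hIu hmem hgood using key
  set V : Dil X σ → Set (Dil X σ) :=
    fun ξ0 => Subtype.val ⁻¹' ((I ξ0 : Set ℤ).pi (u ξ0)) with hV
  have hVopen : ∀ ξ0, IsOpen (V ξ0) := fun ξ0 =>
    (isOpen_set_pi (Finset.finite_toSet _) (hIu ξ0)).preimage continuous_subtype_val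
  have hcover : (Set.univ : Set (Dil X σ)) ⊆ ⋃ ξ0, V ξ0 := fun ξ _ =>
    Set.mem_iUnion.mpr ⟨ξ, hmem ξ⟩
  obtain ⟨t, ht⟩ := isCompact_univ.elim_finite_subcover V hVopen hcover
  refine ⟨t.sup fun ξ0 => (I ξ0).sup Int.natAbs, fun ξ ξ' hagree => ?_⟩
  obtain ⟨ξ0, hξ0t, hξV⟩ := Set.mem_iUnion₂.mp (ht (Set.mem_univ ξ))
  have hξ'V : ξ' ∈ V ξ0 := by
    intro n hn
    have hb : n.natAbs ≤ t.sup fun ξ0 => (I ξ0).sup Int.natAbs :=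
      le_trans (Finset.le_sup (f := Int.natAbs) hn)
        (Finset.le_sup (f := fun ξ0 => (I ξ0).sup Int.natAbs) hξ0t)
    rw [← hagree n hb]
    exact hξV n hn
  exact hgood ξ0 ξ ξ' hξV hξ'V

lemma exists_code {Y : Type} [TopologicalSpace Y] [CompactSpace X] [T2Space X]
    {τ : Y → Y} (hσc : Continuous σ)
    (φ : Dil X σ → Dil Y τ) (hφc : Continuous φ)
    (hφ : ∀ ξ, φ (dilMap σ ξ) = dilMap τ (φ ξ)) (hexp : Expansive τ) :
    ∃ M : ℕ, ∀ ξ ξ' : Dil X σ, ξ.1 0 = ξ'.1 0 → (φ ξ).1 M = (φ ξ').1 M := by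
  obtain ⟨m, hmt, ε, hε, hE⟩ := hexp
  letI mY : MetricSpace Y := m.replaceTopology hmt.symm
  have hEd : ∀ x x' : Y, (∀ n : ℕ, dist (τ^[n] x) (τ^[n] x') < ε) → x = x' := hE
  have hP : ∀ z : Y, ∃ C : Set Y, IsOpen C ∧ z ∈ C ∧
      C ×ˢ C ⊆ {p : Y × Y | dist p.1 p.2 < ε} := by
    intro z
    refine ⟨Metric.ball z (ε / 2), Metric.isOpen_ball,
      Metric.mem_ball_self (by linarith), ?_⟩
    rintro ⟨a, b⟩ ⟨ha, hb⟩
    have ha' := Metric.mem_ball.mp ha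
    have hb' := Metric.mem_ball.mp hb
    have := dist_triangle a z b
    have hzb : dist z b = dist b z := dist_comm z b
    simp only [Set.mem_setOf_eq]
    calc dist a b ≤ dist a z + dist z b := dist_triangle a z b
      _ < ε := by rw [hzb]; linarith
  have hg : Continuous fun ξ : Dil X σ => (φ ξ).1 0 :=
    ((continuous_apply (0 : ℤ)).comp continuous_subtype_val).comp hφc
  obtain ⟨M, hM⟩ := exists_window hσc (fun ξ => (φ ξ).1 0) hg
    {p : Y × Y | dist p.1 p.2 < ε} hP
  refine ⟨M, fun ξ ξ' h0 => ?_⟩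
  have hfwd : ∀ n : ℤ, 0 ≤ n → ξ.1 n = ξ'.1 n := by
    intro n hn
    have h1 := dil_add ξ 0 n.toNat
    have h2 := dil_add ξ' 0 n.toNat
    rw [show (0 : ℤ) + (n.toNat : ℤ) = n from by omega] at h1 h2
    rw [h1, h2, h0]
  apply hEd
  intro k
  have e1 : τ^[k] ((φ ξ).1 M) = (φ ξ).1 ((M : ℤ) + k) := (dil_add (φ ξ) M k).symm
  have e2 : τ^[k] ((φ ξ').1 M) = (φ ξ').1 ((M : ℤ) + k) := (dil_add (φ ξ') M k).symm
  have e3 : (φ ξ).1 ((M : ℤ) + k) = (φ ((dilMap σ)^[M + k] ξ)).1 0 := by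
    rw [comm_iterate hφ, dilMap_iterate]
    congr 1
    push_cast
    ring
  have e4 : (φ ξ').1 ((M : ℤ) + k) = (φ ((dilMap σ)^[M + k] ξ')).1 0 := by
    rw [comm_iterate hφ, dilMap_iterate]
    congr 1
    push_cast
    ring
  have hwin : ∀ n : ℤ, n.natAbs ≤ M →
      ((dilMap σ)^[M + k] ξ).1 n = ((dilMap σ)^[M + k] ξ').1 n := by
    intro n hn
    rw [dilMap_iterate, dilMap_iterate]
    exact hfwd _ (by omega)
  have := hM ((dilMap σ)^[M + k] ξ) ((dilMap σ)^[M + k] ξ') hwin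
  rw [e1, e2, e3, e4]
  exact this

end Aux19

theorem statement_19 (X Y : Type) [TopologicalSpace X] [TopologicalSpace Y]
    [CompactSpace X] [CompactSpace Y] [T2Space X] [T2Space Y]
    [SecondCountableTopology X] [SecondCountableTopology Y]
    [TotallyDisconnectedSpace X] [TotallyDisconnectedSpace Y]
    [TopologicalSpace.MetrizableSpace X] [TopologicalSpace.MetrizableSpace Y]
    (σ : X → X) (τ : Y → Y)
    (hσ : IsLocalHomeomorph σ) (hσsurj : Function.Surjective σ)
    (hτ : IsLocalHomeomorph τ) (hτsurj : Function.Surjective τ)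
    (hσexp : Expansive σ) (hτexp : Expansive τ)
    (ψ : Dil X σ ≃ₜ Dil Y τ)
    (hψ : ∀ ξ : Dil X σ, ψ (dilMap σ ξ) = dilMap τ (ψ ξ)) :
    ∃ (f : X → Y) (f' : Y → X) (N : ℕ),
      Continuous f ∧ IsOpenMap f ∧ Continuous f' ∧ IsOpenMap f' ∧
      (∀ x : X, f (σ x) = τ (f x)) ∧
      (∀ y : Y, f' (τ y) = σ (f' y)) ∧
      (∀ x : X, f' (f x) = σ^[N] x) ∧
      (∀ y : Y, f (f' y) = τ^[N] y) := by
  classical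
  have hσc := hσ.continuous
  have hτc := hτ.continuous
  have hσo := hσ.isOpenMap
  have hτo := hτ.isOpenMap
  haveI := Aux19.dil_compactSpace (σ := σ) hσc
  haveI := Aux19.dil_compactSpace (σ := τ) hτc
  have hψ' : ∀ η : Dil Y τ, ψ.symm (dilMap τ η) = dilMap σ (ψ.symm η) := by
    intro η
    apply ψ.injective
    rw [hψ, ψ.apply_symm_apply, ψ.apply_symm_apply]
  obtain ⟨M, hM⟩ := Aux19.exists_code hσc ψ ψ.continuous hψ hτexp
  obtain ⟨M', hM'⟩ := Aux19.exists_code hτc ψ.symm ψ.symm.continuous hψ' hσexp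
  choose extX hextX using fun x : X => Aux19.exists_dil hσsurj 0 x
  choose extY hextY using fun y : Y => Aux19.exists_dil hτsurj 0 y
  set f : X → Y := fun x => (ψ (extX x)).1 M with hf_def
  set f' : Y → X := fun y => (ψ.symm (extY y)).1 M' with hf'_def
  have hf : ∀ ξ : Dil X σ, f (ξ.1 0) = (ψ ξ).1 M := fun ξ => hM _ _ (hextX (ξ.1 0))
  have hf' : ∀ η : Dil Y τ, f' (η.1 0) = (ψ.symm η).1 M' := fun η => hM' _ _ (hextY (η.1 0))
  have hπXc : Continuous (fun ξ : Dil X σ => ξ.1 0) :=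
    (continuous_apply (0 : ℤ)).comp continuous_subtype_val
  have hπYc : Continuous (fun η : Dil Y τ => η.1 0) :=
    (continuous_apply (0 : ℤ)).comp continuous_subtype_val
  have hπXs : Function.Surjective (fun ξ : Dil X σ => ξ.1 0) := fun x =>
    (Aux19.exists_dil hσsurj 0 x).imp fun ξ h => h
  have hπYs : Function.Surjective (fun η : Dil Y τ => η.1 0) := fun y =>
    (Aux19.exists_dil hτsurj 0 y).imp fun η h => h
  have hπXq : Topology.IsQuotientMap (fun ξ : Dil X σ => ξ.1 0) :=
    (hπXc.isClosedMap).isQuotientMap hπXc hπXs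
  have hπYq : Topology.IsQuotientMap (fun η : Dil Y τ => η.1 0) :=
    (hπYc.isClosedMap).isQuotientMap hπYc hπYs
  have hfc : Continuous f := by
    rw [hπXq.continuous_iff]
    have he : (f ∘ fun ξ : Dil X σ => ξ.1 0) = fun ξ => (ψ ξ).1 M :=
      funext fun ξ => hf ξ
    rw [he]
    exact ((continuous_apply ((M : ℕ) : ℤ)).comp continuous_subtype_val).comp ψ.continuous
  have hf'c : Continuous f' := by
    rw [hπYq.continuous_iff]
    have he : (f' ∘ fun η : Dil Y τ => η.1 0) = fun η => (ψ.symm η).1 M' :=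
      funext fun η => hf' η
    rw [he]
    exact ((continuous_apply ((M' : ℕ) : ℤ)).comp continuous_subtype_val).comp ψ.symm.continuous
  have hπXo := Aux19.pr0_isOpenMap (σ := σ) hσo hσc hσsurj
  have hπYo := Aux19.pr0_isOpenMap (σ := τ) hτo hτc hτsurj
  have hfo : IsOpenMap f := by
    intro U hU
    have himg : f '' U = τ^[M] ''
        ((fun η : Dil Y τ => η.1 0) '' (ψ '' ((fun ξ : Dil X σ => ξ.1 0) ⁻¹' U))) := by
      ext y
      constructor
      · rintro ⟨x, hxU, rfl⟩
        refine ⟨(ψ (extX x)).1 0, ⟨ψ (extX x), ⟨extX x, ?_, rfl⟩, rfl⟩, ?_⟩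
        · show (extX x).1 0 ∈ U
          rw [hextX x]; exact hxU
        · show τ^[M] ((ψ (extX x)).1 0) = f x
          rw [← Aux19.dil_coe (ψ (extX x)) M]
      · rintro ⟨_, ⟨_, ⟨ξ, hξU, rfl⟩, rfl⟩, rfl⟩
        refine ⟨ξ.1 0, hξU, ?_⟩
        rw [hf ξ, Aux19.dil_coe (ψ ξ) M]
    rw [himg]
    exact (Aux19.iterate_isOpenMap hτo M) _ (hπYo _ (ψ.isOpenMap _ (hU.preimage hπXc)))
  have hf'o : IsOpenMap f' := by
    intro U hU
    have himg : f' '' U = σ^[M'] ''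
        ((fun ξ : Dil X σ => ξ.1 0) '' (ψ.symm '' ((fun η : Dil Y τ => η.1 0) ⁻¹' U))) := by
      ext x
      constructor
      · rintro ⟨y, hyU, rfl⟩
        refine ⟨(ψ.symm (extY y)).1 0, ⟨ψ.symm (extY y), ⟨extY y, ?_, rfl⟩, rfl⟩, ?_⟩
        · show (extY y).1 0 ∈ U
          rw [hextY y]; exact hyU
        · show σ^[M'] ((ψ.symm (extY y)).1 0) = f' y
          rw [← Aux19.dil_coe (ψ.symm (extY y)) M']
      · rintro ⟨_, ⟨_, ⟨η, hηU, rfl⟩, rfl⟩, rfl⟩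
        refine ⟨η.1 0, hηU, ?_⟩
        rw [hf' η, Aux19.dil_coe (ψ.symm η) M']
    rw [himg]
    exact (Aux19.iterate_isOpenMap hσo M') _ (hπXo _ (ψ.symm.isOpenMap _ (hU.preimage hπYc)))
  have hfσ : ∀ x : X, f (σ x) = τ (f x) := by
    intro x
    have h1 : (dilMap σ (extX x)).1 0 = σ x := by
      show σ ((extX x).1 0) = σ x
      rw [hextX]
    calc f (σ x) = f ((dilMap σ (extX x)).1 0) := by rw [h1]
      _ = (ψ (dilMap σ (extX x))).1 M := hf _
      _ = (dilMap τ (ψ (extX x))).1 M := by rw [hψ]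
      _ = τ ((ψ (extX x)).1 M) := rfl
      _ = τ (f x) := rfl
  have hf'τ : ∀ y : Y, f' (τ y) = σ (f' y) := by
    intro y
    have h1 : (dilMap τ (extY y)).1 0 = τ y := by
      show τ ((extY y).1 0) = τ y
      rw [hextY]
    calc f' (τ y) = f' ((dilMap τ (extY y)).1 0) := by rw [h1]
      _ = (ψ.symm (dilMap τ (extY y))).1 M' := hf' _
      _ = (dilMap σ (ψ.symm (extY y))).1 M' := by rw [hψ']
      _ = σ ((ψ.symm (extY y)).1 M') := rfl
      _ = σ (f' y) := rfl
  refine ⟨f, f', M + M', hfc, hfo, hf'c, hf'o, hfσ, hf'τ, ?_, ?_⟩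
  · intro x
    have h1 : f x = ((dilMap τ)^[M] (ψ (extX x))).1 0 := by
      rw [Aux19.dilMap_iterate, zero_add]
    rw [h1, hf' _]
    have h2 : ψ.symm ((dilMap τ)^[M] (ψ (extX x))) = (dilMap σ)^[M] (extX x) := by
      rw [Aux19.comm_iterate hψ' M (ψ (extX x)), ψ.symm_apply_apply]
    rw [h2, Aux19.dilMap_iterate]
    have h3 := Aux19.dil_coe (extX x) (M + M')
    rw [hextX] at h3
    rw [show ((M' : ℕ) : ℤ) + ((M : ℕ) : ℤ) = (((M + M' : ℕ)) : ℤ) by push_cast; ring, h3]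
  · intro y
    have h1 : f' y = ((dilMap σ)^[M'] (ψ.symm (extY y))).1 0 := by
      rw [Aux19.dilMap_iterate, zero_add]
    rw [h1, hf _]
    have h2 : ψ ((dilMap σ)^[M'] (ψ.symm (extY y))) = (dilMap τ)^[M'] (extY y) := by
      rw [Aux19.comm_iterate hψ M' (ψ.symm (extY y)), ψ.apply_symm_apply]
    rw [h2, Aux19.dilMap_iterate]
    have h3 := Aux19.dil_coe (extY y) (M + M')
    rw [hextY] at h3
    rw [show ((M : ℕ) : ℤ) + ((M' : ℕ) : ℤ) = (((M + M' : ℕ)) : ℤ) by push_cast; ring, h3]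
end
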